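/- For a finite simplicial complex, the squared chain norm is a Lyapunov function for the generator of the cycle-valued random walk restricted to the recurrence class of a k-cycle X_0: for every σ in the recurrence class, A(‖·‖²)(σ) ≤ -λ_m ‖σ‖² + (k+2)² |S_{k+1}| λ_M / (4 λ_m) + 2 λ_m ‖P_ker X_0‖², where λ_m and λ_M are the smallest positive and largest eigenvalues of L_k^↑ and P_ker is the orthogonal projection onto ker L_k^↑. -/

import Mathlib

open scoped RealInnerProductSpace

/-!
For a boundary `b = ∂τ` with `a = ⟪b, σ⟫` and `n = ‖b‖² = k + 2`, the two orientations `±τ`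
contribute `n |a| - 2 a² ≤ n² / 4 - a²` to `A ‖·‖²(σ)`, so summing gives
`A ‖·‖²(σ) ≤ |S| n² / 4 - ⟪L σ, σ⟫`. As `L` is symmetric and kills `P_ker σ = P_ker X₀`,
`⟪L σ, σ⟫ = ⟪L q, q⟫` for `q = σ - P_ker σ ∈ (ker L)ᗮ`, whence
`⟪L σ, σ⟫ ≥ λ_m (‖σ‖² - ‖P_ker X₀‖²)`. Finally `λ_m ≤ λ_M` as soon as `L ≠ 0`, which bounds
`|S| n² / 4` by the stated constant.
-/

theorem sub_mul_max_add_add_mul_max_neg_le (n a : ℝ) :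
    (n - 2 * a) * max a 0 + (n + 2 * a) * max (-a) 0 ≤ n ^ 2 / 4 - a ^ 2 := by
  rcases le_total 0 a with ha | ha
  · rw [max_eq_left ha, max_eq_right (neg_nonpos.2 ha)]
    nlinarith [sq_nonneg (n / 2 - a)]
  · rw [max_eq_right ha, max_eq_left (neg_nonneg.2 ha)]
    nlinarith [sq_nonneg (n / 2 + a)]

namespace LinearMap

variable {E : Type*} [NormedAddCommGroup E] [InnerProductSpace ℝ E]

theorem IsSymmetric.mul_norm_sq_sub_le_inner_map_self {T : E →ₗ[ℝ] E} (hT : T.IsSymmetric)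
    [(ker T).HasOrthogonalProjection] {c : ℝ} (h : ∀ x ∈ (ker T)ᗮ, c * ‖x‖ ^ 2 ≤ ⟪T x, x⟫)
    (x : E) : c * (‖x‖ ^ 2 - ‖((ker T).orthogonalProjectionOnto x : E)‖ ^ 2) ≤ ⟪T x, x⟫ := by
  set p : E := ((ker T).orthogonalProjectionOnto x : E)
  set q : E := ((ker T)ᗮ.orthogonalProjectionOnto x : E)
  have hx : p + q = x := (ker T).starProjection_add_starProjection_orthogonal x
  have hp : T p = 0 := ((ker T).orthogonalProjectionOnto x).2
  have hpq : ‖x‖ ^ 2 = ‖p‖ ^ 2 + ‖q‖ ^ 2 := (ker T).norm_sq_eq_add_norm_sq_projection x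
  calc c * (‖x‖ ^ 2 - ‖p‖ ^ 2) = c * ‖q‖ ^ 2 := by rw [hpq]; ring
    _ ≤ ⟪T q, q⟫ := h q ((ker T)ᗮ.orthogonalProjectionOnto x).2
    _ = ⟪T x, x⟫ := by
        rw [← hx, map_add, hp, zero_add, inner_add_right, hT q p, hp, inner_zero_right, zero_add]

theorem le_of_forall_le_inner_map_self_of_forall_inner_map_self_le {T : E →ₗ[ℝ] E}
    [(ker T).HasOrthogonalProjection] (hT : T ≠ 0) {c C : ℝ}
    (hc : ∀ x ∈ (ker T)ᗮ, c * ‖x‖ ^ 2 ≤ ⟪T x, x⟫) (hC : ∀ x, ⟪T x, x⟫ ≤ C * ‖x‖ ^ 2) :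
    c ≤ C := by
  have hker : (ker T)ᗮ ≠ ⊥ := by
    rwa [Ne, Submodule.orthogonal_eq_bot_iff, ker_eq_top]
  obtain ⟨x, hx, hx0⟩ := Submodule.exists_mem_ne_zero_of_ne_bot hker
  exact le_of_mul_le_mul_right ((hc x hx).trans (hC x)) (by positivity)

end LinearMap

section FrameOperator

variable {E : Type*} [NormedAddCommGroup E] [InnerProductSpace ℝ E] {ι : Type*} [Fintype ι]

/-- For `v τ = ∂_{k+1} τ` this is the up-Laplacian `∂_{k+1} ∂_{k+1}^*`. -/
noncomputable def frameOperator (v : ι → E) : E →L[ℝ] E := ∑ i, (innerSL ℝ (v i)).smulRight (v i)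

theorem inner_frameOperator_apply (v : ι → E) (x y : E) :
    ⟪frameOperator v x, y⟫ = ∑ i, ⟪v i, x⟫ * ⟪v i, y⟫ := by
  simp only [frameOperator, sum_apply, ContinuousLinearMap.smulRight_apply,
    coe_innerSL_apply, sum_inner, real_inner_smul_left]

theorem isSymmetric_frameOperator (v : ι → E) :
    (frameOperator v : E →ₗ[ℝ] E).IsSymmetric := fun x y => by
  change ⟪frameOperator v x, y⟫ = ⟪x, frameOperator v y⟫
  rw [real_inner_comm _ x, inner_frameOperator_apply, inner_frameOperator_apply]
  exact Finset.sum_congr rfl fun i _ => mul_comm _ _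

theorem inner_eq_zero_of_frameOperator_apply_eq_zero {v : ι → E} {x : E}
    (hx : frameOperator v x = 0) (i : ι) : ⟪v i, x⟫ = 0 := by
  have hsum : ∑ j, ⟪v j, x⟫ * ⟪v j, x⟫ = 0 := by
    rw [← inner_frameOperator_apply, hx, inner_zero_left]
  exact mul_self_eq_zero.1 <|
    (Finset.sum_eq_zero_iff_of_nonneg fun j _ => mul_self_nonneg _).1 hsum i (Finset.mem_univ i)

theorem frameOperator_ne_zero {v : ι → E} {i : ι} (hi : v i ≠ 0) : frameOperator v ≠ 0 :=
  fun h => hi <| inner_self_eq_zero.1 <|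
    inner_eq_zero_of_frameOperator_apply_eq_zero (by rw [h, zero_apply]) i

/-- The generator `A` of the cycle-valued random walk; `±v i` are the boundaries of the two
orientations of the `i`-th `(k+1)`-simplex. -/
noncomputable def cycleWalkGenerator (v : ι → E) (F : E → ℝ) (σ : E) : ℝ :=
  ∑ i, ((F (σ - v i) - F σ) * max ⟪v i, σ⟫ 0 + (F (σ - -v i) - F σ) * max ⟪-v i, σ⟫ 0)

theorem cycleWalkGenerator_norm_sq_le (v : ι → E) (σ : E) :
    cycleWalkGenerator v (‖·‖ ^ 2) σ ≤ ∑ i, (‖v i‖ ^ 2) ^ 2 / 4 - ⟪frameOperator v σ, σ⟫ := by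
  rw [inner_frameOperator_apply, ← Finset.sum_sub_distrib]
  refine Finset.sum_le_sum fun i _ => ?_
  have hsub : ‖σ - v i‖ ^ 2 - ‖σ‖ ^ 2 = ‖v i‖ ^ 2 - 2 * ⟪v i, σ⟫ := by
    rw [norm_sub_sq_real, real_inner_comm]; ring
  have hadd : ‖σ - -v i‖ ^ 2 - ‖σ‖ ^ 2 = ‖v i‖ ^ 2 + 2 * ⟪v i, σ⟫ := by
    rw [sub_neg_eq_add, norm_add_sq_real, real_inner_comm]; ring
  rw [hsub, hadd, inner_neg_left, ← sq]
  exact sub_mul_max_add_add_mul_max_neg_le _ _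

end FrameOperator

/-- `bd τ = ∂_{k+1} τ` for the positively oriented `(k+1)`-simplexes `τ ∈ S`, `L` is the
up-Laplacian, `lamm` and `lamM` stand for `λ_m` and `λ_M` through their quadratic-form bounds,
and `hσ` is what membership of `σ` in the recurrence class of `X0` provides. -/
theorem lyapunov_bound
    {E : Type*} [NormedAddCommGroup E] [InnerProductSpace ℝ E] [FiniteDimensional ℝ E]
    {S : Type*} [Fintype S] (bd : S → E) (k : ℕ)
    (hbd : ∀ τ : S, ‖bd τ‖ ^ 2 = (k : ℝ) + 2)
    (L : E →L[ℝ] E) (hL : L = ∑ τ : S, (innerSL ℝ (bd τ)).smulRight (bd τ))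
    (lamm lamM : ℝ) (hlamm_pos : 0 < lamm)
    (hlamm : ∀ x ∈ (LinearMap.ker (L : E →ₗ[ℝ] E))ᗮ, lamm * ‖x‖ ^ 2 ≤ ⟪L x, x⟫)
    (hlamM : ∀ x : E, ⟪L x, x⟫ ≤ lamM * ‖x‖ ^ 2)
    (X0 σ : E)
    (hσ : (Submodule.orthogonalProjectionOnto (LinearMap.ker (L : E →ₗ[ℝ] E)) σ : E)
        = (Submodule.orthogonalProjectionOnto (LinearMap.ker (L : E →ₗ[ℝ] E)) X0 : E)) :
    ∑ τ : S, ((‖σ - bd τ‖ ^ 2 - ‖σ‖ ^ 2) * max ⟪bd τ, σ⟫ 0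
        + (‖σ - (-(bd τ))‖ ^ 2 - ‖σ‖ ^ 2) * max ⟪-(bd τ), σ⟫ 0)
      ≤ - lamm * ‖σ‖ ^ 2
        + ((k : ℝ) + 2) ^ 2 * (Fintype.card S) * lamM / (4 * lamm)
        + 2 * lamm * ‖(Submodule.orthogonalProjectionOnto (LinearMap.ker (L : E →ₗ[ℝ] E)) X0 : E)‖ ^ 2 := by
  obtain rfl : L = frameOperator bd := hL
  have hgen := cycleWalkGenerator_norm_sq_le bd σ
  simp only [hbd, Finset.sum_const, Finset.card_univ, nsmul_eq_mul] at hgen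
  have hlow := (isSymmetric_frameOperator bd).mul_norm_sq_sub_le_inner_map_self hlamm σ
  rw [hσ, ContinuousLinearMap.coe_coe] at hlow
  have hconst : (Fintype.card S : ℝ) * (((k : ℝ) + 2) ^ 2 / 4)
      ≤ ((k : ℝ) + 2) ^ 2 * (Fintype.card S) * lamM / (4 * lamm) := by
    rcases isEmpty_or_nonempty S with hS | ⟨⟨τ⟩⟩
    · simp
    have hτ : bd τ ≠ 0 :=
      norm_ne_zero_iff.1 <| (pow_ne_zero_iff two_ne_zero).1 <| by rw [hbd τ]; positivity
    have hmM := LinearMap.le_of_forall_le_inner_map_self_of_forall_inner_map_self_le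
      (ContinuousLinearMap.coe_injective.ne (frameOperator_ne_zero hτ)) hlamm hlamM
    rw [le_div_iff₀ (by positivity)]
    calc (Fintype.card S : ℝ) * (((k : ℝ) + 2) ^ 2 / 4) * (4 * lamm)
        = ((k : ℝ) + 2) ^ 2 * Fintype.card S * lamm := by ring
      _ ≤ ((k : ℝ) + 2) ^ 2 * Fintype.card S * lamM := by gcongr
  change cycleWalkGenerator bd (‖·‖ ^ 2) σ ≤ _
  have hP := sq_nonneg
    ‖((LinearMap.ker (frameOperator bd : E →ₗ[ℝ] E)).orthogonalProjectionOnto X0 : E)‖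
  linarith [mul_nonneg hlamm_pos.le hP]
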